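/- arXiv:1412.0245 — 3 statements merged into one kernel-verified Lean document; each statement's English description precedes it below -/
import Mathlib

section
/- Let f₁, …, f_m be real-rooted polynomials of the same degree with positive leading coefficients such that every convex combination p₁f₁ + ⋯ + p_mf_m (with p_i ≥ 0 summing to 1) is real-rooted. Then for any such convex combination f = p₁f₁ + ⋯ + p_mf_m, there exists an index i with p_i > 0 such that the largest real root of f_i is less than or equal to the largest real root of f. -/
open Polynomial

/-- The largest real root of a polynomial. -/
noncomputable def maxRoot (f : Polynomial ℝ) : ℝ := sSup {x : ℝ | f.IsRoot x}

/-- A real polynomial is real-rooted if all of its complex roots are real,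
equivalently (for nonzero `f`) the number of its real roots counted with
multiplicity equals its degree. -/
def RealRooted (f : Polynomial ℝ) : Prop := Multiset.card f.roots = f.natDegree

namespace AuxMR

lemma le_maxRoot {p : Polynomial ℝ} (hp : p ≠ 0) {x : ℝ} (hx : p.IsRoot x) :
    x ≤ maxRoot p :=
  le_csSup (Polynomial.finite_setOf_isRoot hp).bddAbove hx

lemma exists_root {p : Polynomial ℝ} (hr : RealRooted p) (hd : 0 < p.natDegree) :
    ∃ x, p.IsRoot x := by
  have hcard : 0 < Multiset.card p.roots := by rw [hr]; exact hd
  obtain ⟨r, hrmem⟩ := Multiset.card_pos_iff_exists_mem.mp hcard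
  exact ⟨r, (Polynomial.mem_roots'.mp hrmem).2⟩

lemma maxRoot_isRoot {p : Polynomial ℝ} (hp : p ≠ 0) (h : ∃ x, p.IsRoot x) :
    p.IsRoot (maxRoot p) :=
  Set.Nonempty.csSup_mem h (Polynomial.finite_setOf_isRoot hp)

lemma maxRoot_le {p : Polynomial ℝ} (h : ∃ x, p.IsRoot x) {a : ℝ}
    (ha : ∀ x, p.IsRoot x → x ≤ a) : maxRoot p ≤ a :=
  csSup_le h ha

lemma eval_pos {p : Polynomial ℝ} (hr : RealRooted p) (hl : 0 < p.leadingCoeff) {x : ℝ}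
    (hx : ∀ r ∈ p.roots, r < x) : 0 < p.eval x := by
  have hfact := Polynomial.C_leadingCoeff_mul_prod_multiset_X_sub_C hr
  rw [← hfact, eval_mul, eval_C, eval_multiset_prod]
  refine mul_pos hl (Multiset.prod_pos ?_)
  intro a ha
  rw [Multiset.mem_map] at ha
  obtain ⟨q, hq, rfl⟩ := ha
  rw [Multiset.mem_map] at hq
  obtain ⟨r, hrmem, rfl⟩ := hq
  simp only [eval_sub, eval_X, eval_C, sub_pos]
  exact hx r hrmem

lemma eval_pos_of_maxRoot_lt {p : Polynomial ℝ} (hr : RealRooted p) (hl : 0 < p.leadingCoeff)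
    {x : ℝ} (hx : maxRoot p < x) : 0 < p.eval x := by
  have hp : p ≠ 0 := fun h => by simp [h] at hl
  refine eval_pos hr hl (fun r hrmem => ?_)
  exact lt_of_le_of_lt (le_maxRoot hp (Polynomial.mem_roots'.mp hrmem).2) hx

/-- all coefficients nonnegative -/
def NNC (p : Polynomial ℝ) : Prop := ∀ k, 0 ≤ p.coeff k

lemma NNC.mul {p q : Polynomial ℝ} (hp : NNC p) (hq : NNC q) : NNC (p * q) := by
  intro k
  rw [Polynomial.coeff_mul]
  exact Finset.sum_nonneg fun z _ => mul_nonneg (hp z.1) (hq z.2)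

lemma NNC.multiset_prod (s : Multiset (Polynomial ℝ)) (h : ∀ p ∈ s, NNC p) : NNC s.prod := by
  induction s using Multiset.induction with
  | empty => intro k; simp [Polynomial.coeff_one]; positivity
  | cons a s ih =>
    rw [Multiset.prod_cons]
    exact NNC.mul (h a (Multiset.mem_cons_self a s))
      (ih fun p hp => h p (Multiset.mem_cons_of_mem hp))

lemma NNC_X_add_C {b : ℝ} (hb : 0 ≤ b) : NNC (X + C b) := by
  intro k
  rcases eq_or_ne k 0 with rfl | hk
  · simp [hb]
  rcases eq_or_ne k 1 with rfl | hk1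
  · simp
  · rw [Polynomial.coeff_add, Polynomial.coeff_X, Polynomial.coeff_C, if_neg hk1.symm, if_neg hk]
    simp

/-- real-rooted polynomial with all roots `≤ v` has nonneg Taylor coefficients at `v`. -/
lemma good_of_roots_le {p : Polynomial ℝ} (hr : RealRooted p) (hl : 0 < p.leadingCoeff)
    {v : ℝ} (hv : ∀ x, p.IsRoot x → x ≤ v) : NNC (p.comp (X + C v)) := by
  have hp : p ≠ 0 := fun h => by simp [h] at hl
  have hfact := Polynomial.C_leadingCoeff_mul_prod_multiset_X_sub_C hr
  rw [← hfact, Polynomial.mul_comp, Polynomial.C_comp, Polynomial.multiset_prod_comp]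
  refine NNC.mul (fun k => ?_) (NNC.multiset_prod _ ?_)
  · rw [Polynomial.coeff_C]
    split <;> simp [le_of_lt hl]
  · intro q hq
    rw [Multiset.map_map, Multiset.mem_map] at hq
    obtain ⟨r, hrmem, rfl⟩ := hq
    have heq : ((X : Polynomial ℝ) - C r).comp (X + C v) = X + C (v - r) := by
      rw [Polynomial.sub_comp, Polynomial.X_comp, Polynomial.C_comp, Polynomial.C_sub]
      ring
    simp only [Function.comp]
    rw [heq]
    exact NNC_X_add_C (sub_nonneg.mpr (hv r (Polynomial.mem_roots'.mp hrmem).2))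

lemma roots_le_of_good {p : Polynomial ℝ} (hl : 0 < p.leadingCoeff)
    {v : ℝ} (hg : NNC (p.comp (X + C v))) : ∀ x, p.IsRoot x → x ≤ v := by
  intro x hx
  by_contra hvx
  push_neg at hvx
  set q := p.comp (X + C v) with hqdef
  have hq0 : q.eval (x - v) = 0 := by
    rw [hqdef, Polynomial.eval_comp]
    simpa using hx
  have hlq : 0 < q.leadingCoeff := by
    rw [hqdef, Polynomial.leadingCoeff_comp (by simp [Polynomial.natDegree_X_add_C])]
    simpa [Polynomial.leadingCoeff_X_add_C] using hl
  have hs : (0:ℝ) < x - v := sub_pos.mpr hvx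
  have hpos : 0 < q.eval (x - v) := by
    rw [Polynomial.eval_eq_sum_range]
    have hmem : q.natDegree ∈ Finset.range (q.natDegree + 1) := Finset.self_mem_range_succ _
    have hterm : 0 < q.coeff q.natDegree * (x - v) ^ q.natDegree := by
      rw [Polynomial.coeff_natDegree]
      exact mul_pos hlq (pow_pos hs _)
    calc (0:ℝ) < q.coeff q.natDegree * (x - v) ^ q.natDegree := hterm
      _ ≤ _ := Finset.single_le_sum
          (fun i _ => mul_nonneg (hg i) (le_of_lt (pow_pos hs i))) hmem
  rw [hq0] at hpos
  exact lt_irrefl _ hpos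

lemma combo_coeff {m : ℕ} (q : Fin m → ℝ) (f : Fin m → Polynomial ℝ) (k : ℕ) :
    (∑ i, C (q i) * f i).coeff k = ∑ i, q i * (f i).coeff k := by
  rw [Polynomial.finset_sum_coeff]
  exact Finset.sum_congr rfl fun i _ => by rw [Polynomial.coeff_C_mul]

lemma combo_deg {m n : ℕ} {q : Fin m → ℝ} {f : Fin m → Polynomial ℝ}
    (hq0 : ∀ i, 0 ≤ q i)
    (hdeg : ∀ i, q i ≠ 0 → (f i).natDegree = n)
    (hlead : ∀ i, q i ≠ 0 → 0 < (f i).leadingCoeff)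
    (hex : ∃ i, q i ≠ 0) :
    (∑ i, C (q i) * f i).natDegree = n ∧ 0 < (∑ i, C (q i) * f i).leadingCoeff := by
  set F := ∑ i, C (q i) * f i with hF
  have hcoeffn : 0 < F.coeff n := by
    rw [hF, combo_coeff]
    refine Finset.sum_pos' (fun i _ => ?_) ?_
    · rcases eq_or_ne (q i) 0 with h | h
      · simp [h]
      · rw [← hdeg i h, Polynomial.coeff_natDegree]
        exact mul_nonneg (hq0 i) (le_of_lt (hlead i h))
    · obtain ⟨i, hi⟩ := hex
      refine ⟨i, Finset.mem_univ i, ?_⟩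
      rw [← hdeg i hi, Polynomial.coeff_natDegree]
      exact mul_pos (lt_of_le_of_ne (hq0 i) (Ne.symm hi)) (hlead i hi)
  have hhigh : F.natDegree ≤ n := by
    rw [Polynomial.natDegree_le_iff_coeff_eq_zero]
    intro N hN
    rw [hF, combo_coeff]
    refine Finset.sum_eq_zero fun i _ => ?_
    rcases eq_or_ne (q i) 0 with h | h
    · simp [h]
    · rw [Polynomial.coeff_eq_zero_of_natDegree_lt (by rw [hdeg i h]; exact hN), mul_zero]
  have hdegF : F.natDegree = n :=
    le_antisymm hhigh (Polynomial.le_natDegree_of_ne_zero (ne_of_gt hcoeffn))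
  exact ⟨hdegF, by rw [Polynomial.leadingCoeff, hdegF]; exact hcoeffn⟩

lemma pencil_coeff (F G : Polynomial ℝ) (t : ℝ) (k : ℕ) :
    (C (1 - t) * F + C t * G).coeff k = (1 - t) * F.coeff k + t * G.coeff k := by
  rw [Polynomial.coeff_add, Polynomial.coeff_C_mul, Polynomial.coeff_C_mul]

lemma pencil_deg {n : ℕ} {F G : Polynomial ℝ}
    (hFd : F.natDegree = n) (hGd : G.natDegree = n)
    (hFl : 0 < F.leadingCoeff) (hGl : 0 < G.leadingCoeff)
    {t : ℝ} (ht0 : 0 ≤ t) (ht1 : t ≤ 1) :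
    (C (1 - t) * F + C t * G).natDegree = n ∧
    0 < (C (1 - t) * F + C t * G).leadingCoeff := by
  have hcn : 0 < (C (1 - t) * F + C t * G).coeff n := by
    have hFc : F.coeff n = F.leadingCoeff := by rw [← hFd]; exact Polynomial.coeff_natDegree
    have hGc : G.coeff n = G.leadingCoeff := by rw [← hGd]; exact Polynomial.coeff_natDegree
    rw [pencil_coeff, hFc, hGc]
    rcases eq_or_lt_of_le ht0 with h | h
    · rw [← h]; simpa using hFl
    · have h1 : 0 ≤ 1 - t := by linarith
      nlinarith
  have hhigh : (C (1 - t) * F + C t * G).natDegree ≤ n := by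
    rw [Polynomial.natDegree_le_iff_coeff_eq_zero]
    intro N hN
    rw [pencil_coeff,
      Polynomial.coeff_eq_zero_of_natDegree_lt (by rw [hFd]; exact hN),
      Polynomial.coeff_eq_zero_of_natDegree_lt (by rw [hGd]; exact hN)]
    ring
  have hdeg : (C (1 - t) * F + C t * G).natDegree = n :=
    le_antisymm hhigh (Polynomial.le_natDegree_of_ne_zero (ne_of_gt hcn))
  exact ⟨hdeg, by rw [Polynomial.leadingCoeff, hdeg]; exact hcn⟩

/-- The key pair lemma. -/
lemma pair {n : ℕ} (hn : 0 < n) {F G : Polynomial ℝ}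
    (hFd : F.natDegree = n) (hGd : G.natDegree = n)
    (hFl : 0 < F.leadingCoeff) (hGl : 0 < G.leadingCoeff)
    (hFr : RealRooted F) (hGr : RealRooted G)
    (hpen : ∀ t : ℝ, 0 ≤ t → t ≤ 1 → RealRooted (C (1 - t) * F + C t * G))
    (hpos : 0 < G.eval (maxRoot F)) : maxRoot G ≤ maxRoot F := by
  have hF0 : F ≠ 0 := fun h => by simp [h] at hFl
  have hG0 : G ≠ 0 := fun h => by simp [h] at hGl
  set lam := maxRoot F with hlam
  by_contra hcon
  push_neg at hcon
  set mu := maxRoot G with hmu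
  have hGroot : ∃ x, G.IsRoot x := exists_root hGr (hGd ▸ hn)
  have hmuroot : G.IsRoot mu := maxRoot_isRoot hG0 hGroot
  have hFrootsle : ∀ x, F.IsRoot x → x ≤ lam := fun x hx => le_maxRoot hF0 hx
  -- Claim: G is negative on (lam, mu)
  have claim : ∀ v, lam < v → v < mu → G.eval v < 0 := by
    intro v hv1 hv2
    set c : ℕ → ℝ := fun k => (F.comp (X + C v)).coeff k with hc
    set d : ℕ → ℝ := fun k => (G.comp (X + C v)).coeff k with hd
    have hcomp_coeff : ∀ (t : ℝ) (k : ℕ),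
        ((C (1 - t) * F + C t * G).comp (X + C v)).coeff k = (1 - t) * c k + t * d k := by
      intro t k
      rw [Polynomial.add_comp, Polynomial.mul_comp, Polynomial.mul_comp,
        Polynomial.C_comp, Polynomial.C_comp, Polynomial.coeff_add,
        Polynomial.coeff_C_mul, Polynomial.coeff_C_mul]
    set S : Set ℝ := {t | (0 ≤ t ∧ t ≤ 1) ∧ ∀ k, 0 ≤ (1 - t) * c k + t * d k} with hS
    have hS0 : (0:ℝ) ∈ S := by
      refine ⟨⟨le_refl 0, zero_le_one⟩, fun k => ?_⟩
      have := good_of_roots_le hFr hFl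
        (fun x hx => le_of_lt (lt_of_le_of_lt (hFrootsle x hx) hv1)) k
      simpa [hc] using this
    have hSbdd : BddAbove S := ⟨1, fun t ht => ht.1.2⟩
    have hSclosed : IsClosed S := by
      have heq : S = (Set.Icc (0:ℝ) 1) ∩ ⋂ k, {t : ℝ | 0 ≤ (1 - t) * c k + t * d k} := by
        ext t
        simp only [hS, Set.mem_setOf_eq, Set.mem_inter_iff, Set.mem_Icc, Set.mem_iInter]
      rw [heq]
      exact isClosed_Icc.inter (isClosed_iInter fun k =>
        isClosed_le continuous_const (by fun_prop))
    have htsS : sSup S ∈ S := IsClosed.csSup_mem hSclosed ⟨0, hS0⟩ hSbdd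
    set ts := sSup S with hts
    have hts0 : 0 ≤ ts := le_csSup hSbdd hS0
    have h1S : (1:ℝ) ∉ S := by
      intro h1
      have hgood : NNC (G.comp (X + C v)) := fun k => by
        have := h1.2 k; simpa [hd] using this
      exact absurd (roots_le_of_good hGl hgood mu hmuroot) (not_le.mpr hv2)
    have hts1 : ts < 1 :=
      lt_of_le_of_ne (csSup_le ⟨0, hS0⟩ fun t ht => ht.1.2) (fun h => h1S (h ▸ htsS))
    set mx := max lam mu with hmx
    -- roots above v for t > ts
    have hroot_above : ∀ t : ℝ, ts < t → t ≤ 1 →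
        ∃ x, (C (1 - t) * F + C t * G).IsRoot x ∧ v < x ∧ x ≤ mx := by
      intro t htl htu
      have ht0 : 0 ≤ t := le_trans hts0 (le_of_lt htl)
      have hRR := hpen t ht0 htu
      have hlt := pencil_deg hFd hGd hFl hGl ht0 htu
      have hnotgood : ¬ NNC ((C (1 - t) * F + C t * G).comp (X + C v)) := by
        intro hgood
        have htS : t ∈ S := ⟨⟨ht0, htu⟩, fun k => by rw [← hcomp_coeff]; exact hgood k⟩
        exact absurd (le_csSup hSbdd htS) (not_le.mpr htl)
      have hex : ∃ x, (C (1 - t) * F + C t * G).IsRoot x ∧ v < x := by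
        by_contra hno
        push_neg at hno
        exact hnotgood (good_of_roots_le hRR hlt.2 (fun x hx => hno x hx))
      obtain ⟨x, hxroot, hxv⟩ := hex
      refine ⟨x, hxroot, hxv, ?_⟩
      by_contra hxm
      push_neg at hxm
      have hFx : 0 < F.eval x :=
        eval_pos_of_maxRoot_lt hFr hFl (lt_of_le_of_lt (le_max_left _ _) hxm)
      have hGx : 0 < G.eval x :=
        eval_pos_of_maxRoot_lt hGr hGl (lt_of_le_of_lt (le_max_right _ _) hxm)
      have hzero : (1 - t) * F.eval x + t * G.eval x = 0 := by
        have := hxroot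
        simpa [Polynomial.IsRoot, eval_add, eval_mul, eval_C] using this
      nlinarith [mul_nonneg (by linarith : (0:ℝ) ≤ 1 - t) hFx.le,
        mul_pos (lt_of_le_of_lt hts0 htl) hGx]
    -- sequence converging to ts from above
    set tn : ℕ → ℝ := fun k => ts + (1 - ts) / (k + 1) with htn
    have htn_mem : ∀ k : ℕ, ts < tn k ∧ tn k ≤ 1 := by
      intro k
      have hk1 : (0:ℝ) < (k:ℝ) + 1 := by positivity
      have htnk : tn k = ts + (1 - ts) / ((k:ℝ) + 1) := rfl
      constructor
      · have : 0 < (1 - ts) / ((k:ℝ) + 1) := div_pos (by linarith) hk1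
        rw [htnk]; linarith
      · have h1 : (1 - ts) / ((k:ℝ) + 1) ≤ 1 - ts :=
          div_le_self (by linarith) (by linarith [Nat.cast_nonneg (α := ℝ) k])
        rw [htnk]; linarith
    choose xn hxn using fun k => hroot_above (tn k) (htn_mem k).1 (htn_mem k).2
    have hxmem : ∀ k, xn k ∈ Set.Icc v mx := fun k => ⟨le_of_lt (hxn k).2.1, (hxn k).2.2⟩
    obtain ⟨xs, hxs_mem, φ, hφ, hxs_tendsto⟩ := isCompact_Icc.tendsto_subseq hxmem
    have htn_tendsto : Filter.Tendsto tn Filter.atTop (nhds ts) := by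
      have h0 : Filter.Tendsto (fun k : ℕ => (1 - ts) * (1 / ((k:ℝ) + 1)))
          Filter.atTop (nhds 0) := by
        simpa using tendsto_one_div_add_atTop_nhds_zero_nat.const_mul (1 - ts)
      have := Filter.Tendsto.add (tendsto_const_nhds (x := ts)) h0
      simp only [add_zero] at this
      refine this.congr fun k => ?_
      simp only [htn]
      ring
    have htnφ : Filter.Tendsto (tn ∘ φ) Filter.atTop (nhds ts) :=
      htn_tendsto.comp hφ.tendsto_atTop
    have heval : ∀ k, (1 - tn (φ k)) * F.eval (xn (φ k)) + tn (φ k) * G.eval (xn (φ k)) = 0 := by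
      intro k
      have := (hxn (φ k)).1
      simpa [Polynomial.IsRoot, eval_add, eval_mul, eval_C] using this
    have hlim : (1 - ts) * F.eval xs + ts * G.eval xs = 0 := by
      have hcont : Filter.Tendsto
          (fun k => (1 - tn (φ k)) * F.eval (xn (φ k)) + tn (φ k) * G.eval (xn (φ k)))
          Filter.atTop (nhds ((1 - ts) * F.eval xs + ts * G.eval xs)) := by
        refine Filter.Tendsto.add (Filter.Tendsto.mul ?_ ?_) (Filter.Tendsto.mul htnφ ?_)
        · exact (tendsto_const_nhds (x := (1:ℝ))).sub htnφ
        · exact ((Polynomial.continuous F).continuousAt.tendsto).comp hxs_tendsto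
        · exact ((Polynomial.continuous G).continuousAt.tendsto).comp hxs_tendsto
      have hzero : Filter.Tendsto
          (fun k => (1 - tn (φ k)) * F.eval (xn (φ k)) + tn (φ k) * G.eval (xn (φ k)))
          Filter.atTop (nhds 0) := by
        simpa [heval] using (tendsto_const_nhds (x := (0:ℝ)))
      exact (tendsto_nhds_unique hcont hzero)
    have hgoodts : ∀ x, (C (1 - ts) * F + C ts * G).IsRoot x → x ≤ v := by
      refine roots_le_of_good (pencil_deg hFd hGd hFl hGl hts0 hts1.le).2 (fun k => ?_)
      rw [hcomp_coeff]
      exact htsS.2 k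
    have hxsroot : (C (1 - ts) * F + C ts * G).IsRoot xs := by
      simp [Polynomial.IsRoot, eval_add, eval_mul, eval_C, hlim]
    have hxsv : xs = v := le_antisymm (hgoodts xs hxsroot) hxs_mem.1
    have hFv : 0 < F.eval v := eval_pos_of_maxRoot_lt hFr hFl hv1
    have hts_pos : 0 < ts := by
      rcases eq_or_lt_of_le hts0 with h | h
      · exfalso
        rw [hxsv, ← h] at hlim
        simp at hlim
        have : F.IsRoot v := by simpa [Polynomial.IsRoot] using hlim
        exact absurd (hFrootsle v this) (not_le.mpr hv1)
      · exact h
    rw [hxsv] at hlim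
    nlinarith [mul_pos (by linarith : (0:ℝ) < 1 - ts) hFv]
  -- contradiction with hpos via right limit at lam
  have hle : G.eval lam ≤ 0 := by
    have htend : Filter.Tendsto (fun x => G.eval x) (nhdsWithin lam (Set.Ioi lam))
        (nhds (G.eval lam)) :=
      ((Polynomial.continuous G).continuousAt.continuousWithinAt).tendsto
    refine le_of_tendsto htend ?_
    have hmem : Set.Ioo lam mu ∈ nhdsWithin lam (Set.Ioi lam) :=
      Ioo_mem_nhdsGT_of_mem ⟨le_refl lam, hcon⟩
    filter_upwards [hmem] with x hx
    exact le_of_lt (claim x hx.1 hx.2)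
  linarith

lemma main : ∀ n : ℕ, 0 < n → ∀ (m : ℕ) (f : Fin m → Polynomial ℝ) (p : Fin m → ℝ),
    (∀ i, 0 ≤ p i) → (∑ i, p i = 1) →
    (∀ i, p i ≠ 0 → (f i).natDegree = n) →
    (∀ i, p i ≠ 0 → 0 < (f i).leadingCoeff) →
    (∀ i, p i ≠ 0 → RealRooted (f i)) →
    (∀ q : Fin m → ℝ, (∀ i, 0 ≤ q i) → (∀ i, p i = 0 → q i = 0) → ∑ i, q i = 1 →
      RealRooted (∑ i, C (q i) * f i)) →
    ∃ i, 0 < p i ∧ maxRoot (f i) ≤ maxRoot (∑ i, C (p i) * f i) := by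
  intro n
  induction n using Nat.strong_induction_on with
  | _ n ih =>
  intro hn m f p hp0 hp1 hdeg hlead hrr hcomp
  have hex : ∃ i, p i ≠ 0 := by
    by_contra h
    push_neg at h
    rw [Finset.sum_eq_zero (fun i _ => h i)] at hp1
    exact absurd hp1 (by norm_num)
  set F := ∑ i, C (p i) * f i with hF
  obtain ⟨hFd, hFl⟩ := combo_deg hp0 hdeg hlead hex
  rw [← hF] at hFd hFl
  have hFr : RealRooted F := hcomp p hp0 (fun i hi => hi) hp1
  have hF0 : F ≠ 0 := fun h => by simp [h] at hFl
  set lam := maxRoot F with hlam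
  have hFroot : F.IsRoot lam := maxRoot_isRoot hF0 (exists_root hFr (hFd ▸ hn))
  have hsum : ∑ i, p i * (f i).eval lam = 0 := by
    have := hFroot
    rw [Polynomial.IsRoot, hF, Polynomial.eval_finset_sum] at this
    simpa [eval_mul, eval_C] using this
  by_cases hcase : ∃ i, 0 < p i ∧ 0 < (f i).eval lam
  · obtain ⟨i, hpi, hei⟩ := hcase
    have hpen : ∀ t : ℝ, 0 ≤ t → t ≤ 1 → RealRooted (C (1 - t) * F + C t * f i) := by
      intro t ht0 ht1
      set q : Fin m → ℝ := fun j => (1 - t) * p j + t * (if j = i then 1 else 0) with hq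
      have hqeq : (∑ j, C (q j) * f j) = C (1 - t) * F + C t * f i := by
        have h1 : ∀ j, C (q j) * f j
            = C (1 - t) * (C (p j) * f j) + C (t * (if j = i then 1 else 0)) * f j := by
          intro j
          simp only [hq]
          rw [Polynomial.C_add, Polynomial.C_mul]
          ring
        rw [Finset.sum_congr rfl (fun j _ => h1 j), Finset.sum_add_distrib, ← Finset.mul_sum]
        congr 1
        rw [Finset.sum_eq_single i]
        · simp
        · intro j _ hj
          simp [hj]
        · intro h
          exact absurd (Finset.mem_univ i) h
      rw [← hqeq]
      refine hcomp q (fun j => ?_) (fun j hj => ?_) ?_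
      · simp only [hq]
        have h2 : (0:ℝ) ≤ (if j = i then (1:ℝ) else 0) := by split <;> norm_num
        have h1 : (0:ℝ) ≤ 1 - t := by linarith
        exact add_nonneg (mul_nonneg h1 (hp0 j)) (mul_nonneg ht0 h2)
      · simp only [hq, hj]
        rcases eq_or_ne j i with rfl | hji
        · exact absurd hj (ne_of_gt hpi)
        · simp [hji]
      · simp only [hq]
        rw [Finset.sum_add_distrib, ← Finset.mul_sum, hp1, ← Finset.mul_sum]
        rw [Finset.sum_ite_eq' Finset.univ i (fun _ => (1:ℝ))]
        simp
    have hple := pair hn hFd (hdeg i (ne_of_gt hpi)) hFl (hlead i (ne_of_gt hpi)) hFr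
      (hrr i (ne_of_gt hpi)) hpen hei
    exact ⟨i, hpi, hple⟩
  · push_neg at hcase
    have hterm : ∀ i ∈ Finset.univ, p i * (f i).eval lam ≤ 0 := by
      intro i _
      rcases eq_or_lt_of_le (hp0 i) with h | h
      · rw [← h]; simp
      · exact mul_nonpos_of_nonneg_of_nonpos (le_of_lt h) (hcase i h)
    have hall : ∀ i, p i ≠ 0 → (f i).eval lam = 0 := by
      intro i hi
      have := (Finset.sum_eq_zero_iff_of_nonpos hterm).mp hsum i (Finset.mem_univ i)
      rcases mul_eq_zero.mp this with h | h
      · exact absurd h hi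
      · exact h
    rcases eq_or_ne n 1 with rfl | hn2
    · -- degree 1 case: the only root of f i is lam
      obtain ⟨i, hi⟩ := hex
      refine ⟨i, lt_of_le_of_ne (hp0 i) (Ne.symm hi), ?_⟩
      have hfi0 : f i ≠ 0 := fun h => by simpa [h] using (hlead i hi)
      have hroots1 : Multiset.card (f i).roots = 1 := by
        rw [hrr i hi, hdeg i hi]
      obtain ⟨a, ha⟩ := Multiset.card_eq_one.mp hroots1
      have hlamroot : lam ∈ (f i).roots := by
        rw [Polynomial.mem_roots']
        exact ⟨hfi0, hall i hi⟩
      rw [ha, Multiset.mem_singleton] at hlamroot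
      refine maxRoot_le ⟨lam, hall i hi⟩ (fun x hx => ?_)
      have hxmem : x ∈ (f i).roots := by
        rw [Polynomial.mem_roots']
        exact ⟨hfi0, hx⟩
      rw [ha, Multiset.mem_singleton] at hxmem
      rw [hxmem, hlamroot]
    · -- n ≥ 2 : divide by (X - lam) and recurse
      have hn1 : 1 < n := lt_of_le_of_ne hn (Ne.symm hn2)
      set g : Fin m → Polynomial ℝ := fun i => f i /ₘ (X - C lam) with hg
      have hfac : ∀ i, p i ≠ 0 → (X - C lam) * g i = f i := fun i hi =>
        (Polynomial.mul_divByMonic_eq_iff_isRoot).mpr (hall i hi)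
      have hfi0 : ∀ i, p i ≠ 0 → f i ≠ 0 := fun i hi h => by simpa [h] using hlead i hi
      have hgi0 : ∀ i, p i ≠ 0 → g i ≠ 0 := by
        intro i hi h
        have hne := hfi0 i hi
        rw [← hfac i hi, h, mul_zero] at hne
        exact hne rfl
      have hXC0 : (X - C lam : Polynomial ℝ) ≠ 0 := Polynomial.X_sub_C_ne_zero lam
      have hgdeg : ∀ i, p i ≠ 0 → (g i).natDegree = n - 1 := by
        intro i hi
        have := Polynomial.natDegree_mul hXC0 (hgi0 i hi)
        rw [hfac i hi, hdeg i hi, Polynomial.natDegree_X_sub_C] at this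
        omega
      have hglead : ∀ i, p i ≠ 0 → 0 < (g i).leadingCoeff := by
        intro i hi
        have := Polynomial.leadingCoeff_mul (X - C lam) (g i)
        rw [hfac i hi, Polynomial.leadingCoeff_X_sub_C, one_mul] at this
        rw [← this]
        exact hlead i hi
      have hgrr : ∀ i, p i ≠ 0 → RealRooted (g i) := by
        intro i hi
        have hmulne : (X - C lam) * g i ≠ 0 := by rw [hfac i hi]; exact hfi0 i hi
        have hroots := Polynomial.roots_mul hmulne
        rw [hfac i hi, Polynomial.roots_X_sub_C] at hroots
        have hcard : Multiset.card (f i).roots = 1 + Multiset.card (g i).roots := by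
          rw [hroots, Multiset.card_add, Multiset.card_singleton]
        rw [RealRooted]
        rw [hrr i hi, hdeg i hi] at hcard
        rw [hgdeg i hi]
        omega
      have hcomboeq : ∀ q : Fin m → ℝ, (∀ i, p i = 0 → q i = 0) →
          (∑ i, C (q i) * f i) = (X - C lam) * ∑ i, C (q i) * g i := by
        intro q hqs
        rw [Finset.mul_sum]
        refine Finset.sum_congr rfl (fun j _ => ?_)
        rcases eq_or_ne (p j) 0 with h | h
        · rw [hqs j h]
          simp
        · rw [← hfac j h]
          ring
      have hcomp' : ∀ q : Fin m → ℝ, (∀ i, 0 ≤ q i) → (∀ i, p i = 0 → q i = 0) →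
          ∑ i, q i = 1 → RealRooted (∑ i, C (q i) * g i) := by
        intro q hq0 hqs hq1
        have hB := hcomp q hq0 hqs hq1
        rw [hcomboeq q hqs] at hB
        have hexq : ∃ i, q i ≠ 0 := by
          by_contra h
          push_neg at h
          rw [Finset.sum_eq_zero (fun i _ => h i)] at hq1
          exact absurd hq1 (by norm_num)
        have hqgdeg : ∀ i, q i ≠ 0 → (g i).natDegree = n - 1 := fun i hi =>
          hgdeg i (fun h => hi (hqs i h))
        have hqglead : ∀ i, q i ≠ 0 → 0 < (g i).leadingCoeff := fun i hi =>
          hglead i (fun h => hi (hqs i h))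
        obtain ⟨hAdeg, hAlead⟩ := combo_deg hq0 hqgdeg hqglead hexq
        have hA0 : (∑ i, C (q i) * g i) ≠ 0 := fun h => by simp [h] at hAlead
        have hmulne : (X - C lam) * (∑ i, C (q i) * g i) ≠ 0 := mul_ne_zero hXC0 hA0
        have hroots := Polynomial.roots_mul hmulne
        rw [Polynomial.roots_X_sub_C] at hroots
        rw [RealRooted] at hB ⊢
        rw [hroots, Multiset.card_add, Multiset.card_singleton] at hB
        rw [Polynomial.natDegree_mul hXC0 hA0, Polynomial.natDegree_X_sub_C] at hB
        omega
      obtain ⟨i, hpi, hle⟩ := ih (n - 1) (by omega) (by omega) m g p hp0 hp1 hgdeg hglead hgrr hcomp'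
      set Gc := ∑ i, C (p i) * g i with hGc
      have hFfac : F = (X - C lam) * Gc := hcomboeq p (fun i hi => hi)
      have hgpdeg : ∀ i, p i ≠ 0 → (g i).natDegree = n - 1 := hgdeg
      obtain ⟨hGdeg, hGlead⟩ := combo_deg hp0 hgdeg hglead hex
      rw [← hGc] at hGdeg hGlead
      have hG0 : Gc ≠ 0 := fun h => by simp [h] at hGlead
      have hGrr : RealRooted Gc := hcomp' p hp0 (fun i hi => hi) hp1
      have hGroots_le : ∀ x, Gc.IsRoot x → x ≤ lam := by
        intro x hx
        have hrootF : F.IsRoot x := by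
          rw [hFfac, Polynomial.IsRoot.def, eval_mul]
          exact mul_eq_zero_of_right _ hx
        exact le_maxRoot hF0 hrootF
      have hGle : maxRoot Gc ≤ lam :=
        maxRoot_le (exists_root hGrr (by rw [hGdeg]; omega)) hGroots_le
      refine ⟨i, hpi, ?_⟩
      have hpi' : p i ≠ 0 := ne_of_gt hpi
      refine maxRoot_le ⟨lam, hall i hpi'⟩ (fun x hx => ?_)
      have : (x - lam) * (g i).eval x = 0 := by
        have := hx
        rw [Polynomial.IsRoot, ← hfac i hpi', eval_mul, eval_sub, eval_X, eval_C] at this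
        exact this
      rcases mul_eq_zero.mp this with h | h
      · have : x = lam := by linarith [sub_eq_zero.mp h]
        exact le_of_eq this
      · have hxg : x ≤ maxRoot (g i) := le_maxRoot (hgi0 i hpi') h
        exact le_trans hxg (le_trans hle hGle)

end AuxMR

theorem stmt0 (m n : ℕ) (hm : 0 < m) (hn : 0 < n) (f : Fin m → Polynomial ℝ)
    (hdeg : ∀ i, (f i).natDegree = n)
    (hlead : ∀ i, 0 < (f i).leadingCoeff)
    (hrooted : ∀ i, RealRooted (f i))
    (hcomp : ∀ p : Fin m → ℝ, (∀ i, 0 ≤ p i) → ∑ i, p i = 1 →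
      RealRooted (∑ i, Polynomial.C (p i) * f i))
    (p : Fin m → ℝ) (hp : ∀ i, 0 ≤ p i) (hp1 : ∑ i, p i = 1) :
    ∃ i, 0 < p i ∧ maxRoot (f i) ≤ maxRoot (∑ i, Polynomial.C (p i) * f i) := by
  exact AuxMR.main n hn m f p hp hp1 (fun i _ => hdeg i) (fun i _ => hlead i)
    (fun i _ => hrooted i) (fun q hq _ hq1 => hcomp q hq hq1)
end

section
/- Let f be a real-rooted polynomial of degree n - 1 and g a real-rooted polynomial of degree n, both with positive leading coefficients, such that f interleaves g (i.e. β₁ ≤ α₁ ≤ β₂ ≤ ⋯ ≤ α_{n-1} ≤ β_n where the α's are the roots of f and the β's are the roots of g). Then for every real p with 0 ≤ p ≤ 1 and every other real-rooted degree-n polynomial g' with positive leading coefficient also interleaved by f, the polynomial p·g + (1-p)·g' is real-rooted. -/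
open Polynomial Complex

lemma step (z : ℂ) (hy : 0 < z.im) (t c α β : ℝ) (ht : 0 < t) (hc : c ≤ α) (hαβ : α ≤ β) :
    ∃ t' c' : ℝ, 0 < t' ∧ c' ≤ β ∧
      (t * (z - c)) * ((z - β) * (starRingEnd ℂ) (z - α)) = (t' : ℂ) * (z - c') := by
  set x := z.re with hx
  set y := z.im with hyy
  set Q : ℝ := (x - α)^2 + y^2 + (α - c) * (β - α) with hQdef
  have hQ : 0 < Q := by nlinarith [sq_nonneg (x - α), mul_nonneg (sub_nonneg.2 hc) (sub_nonneg.2 hαβ)]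
  set R : ℝ := (x - β) * ((x - α) * (x - c) + y^2) - y * (y * (c - α)) with hRdef
  refine ⟨t * Q, x - R / Q, by positivity, ?_, ?_⟩
  · have hkey : R - (x - β) * Q = (α - c) * ((x - β)^2 + y^2) := by rw [hRdef, hQdef]; ring
    have h1 : (x - β) * Q ≤ R := by nlinarith [mul_nonneg (sub_nonneg.2 hc) (add_nonneg (sq_nonneg (x-β)) (sq_nonneg y))]
    have h2 : x - β ≤ R / Q := (le_div_iff₀ hQ).2 (by linarith [h1])
    linarith
  · have hQ0 : Q ≠ 0 := ne_of_gt hQ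
    rw [Complex.ext_iff]
    constructor <;>
      simp only [mul_re, mul_im, sub_re, sub_im, ofReal_re, ofReal_im, conj_re, conj_im, ← hx, ← hyy] <;>
      field_simp <;> ring

lemma key (z : ℂ) (hy : 0 < z.im) :
    ∀ (n : ℕ) (a b : ℝ) (α : Fin n → ℝ) (β : Fin (n+1) → ℝ), 0 < a → 0 < b →
    (∀ i : Fin n, β i.castSucc ≤ α i ∧ α i ≤ β i.succ) →
    ∃ t c : ℝ, 0 < t ∧ c ≤ β (Fin.last n) ∧
      ((b : ℂ) * ∏ j, (z - (β j : ℂ))) * (starRingEnd ℂ) ((a:ℂ) * ∏ i, (z - (α i : ℂ)))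
        = (t:ℂ) * (z - (c:ℂ)) := by
  intro n
  induction n with
  | zero =>
    intro a b α β ha hb hint
    refine ⟨a * b, β 0, by positivity, by simp [Fin.last], ?_⟩
    simp [Fin.prod_univ_one, conj_ofReal]
    push_cast
    ring
  | succ n ih =>
    intro a b α β ha hb hint
    obtain ⟨t, c, ht, hc, heq⟩ := ih a b (α ∘ Fin.castSucc) (β ∘ Fin.castSucc) ha hb
      (fun i => by
        refine ⟨?_, ?_⟩
        · simpa using (hint i.castSucc).1
        · have := (hint i.castSucc).2
          rw [Fin.succ_castSucc] at this; exact this)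
    have hc' : c ≤ α (Fin.last n) := le_trans (by simpa using hc) (hint (Fin.last n)).1
    have hab : α (Fin.last n) ≤ β (Fin.last (n+1)) := by
      have := (hint (Fin.last n)).2
      simpa [Fin.succ_last] using this
    obtain ⟨t', c', ht', hc'2, heq'⟩ := step z hy t c (α (Fin.last n)) (β (Fin.last (n+1))) ht hc' hab
    refine ⟨t', c', ht', hc'2, ?_⟩
    rw [Fin.prod_univ_castSucc (f := fun j => z - (β j : ℂ)),
        Fin.prod_univ_castSucc (f := fun i => z - (α i : ℂ))]
    calc ((b:ℂ) * ((∏ j : Fin (n+1), (z - (β j.castSucc : ℂ))) * (z - (β (Fin.last (n+1)) : ℂ)))) *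
          (starRingEnd ℂ) ((a:ℂ) * ((∏ i : Fin n, (z - (α i.castSucc : ℂ))) * (z - (α (Fin.last n) : ℂ))))
        = (((b:ℂ) * ∏ j : Fin (n+1), (z - ((β ∘ Fin.castSucc) j : ℂ))) *
            (starRingEnd ℂ) ((a:ℂ) * ∏ i : Fin n, (z - ((α ∘ Fin.castSucc) i : ℂ)))) *
          ((z - (β (Fin.last (n+1)) : ℂ)) * (starRingEnd ℂ) (z - (α (Fin.last n) : ℂ))) := by
          simp only [map_mul, Function.comp]; ring
      _ = ((t:ℂ) * (z - (c:ℂ))) * ((z - (β (Fin.last (n+1)) : ℂ)) * (starRingEnd ℂ) (z - (α (Fin.last n) : ℂ))) := by rw [heq]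
      _ = (t':ℂ) * (z - (c':ℂ)) := heq'

lemma noroot_pos (n : ℕ) (b b' p : ℝ) (α : Fin n → ℝ) (β β' : Fin (n + 1) → ℝ)
    (hb : 0 < b) (hb' : 0 < b') (hp0 : 0 ≤ p) (hp1 : p ≤ 1)
    (hint : ∀ i : Fin n, β i.castSucc ≤ α i ∧ α i ≤ β i.succ)
    (hint' : ∀ i : Fin n, β' i.castSucc ≤ α i ∧ α i ≤ β' i.succ)
    (z : ℂ) (hz : 0 < z.im) :
    (p : ℂ) * ((b:ℂ) * ∏ j, (z - (β j : ℂ))) + ((1-p : ℝ):ℂ) * ((b':ℂ) * ∏ j, (z - (β' j : ℂ))) ≠ 0 := by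
  obtain ⟨t, c, ht, -, heq⟩ := key z hz n 1 b α β one_pos hb hint
  obtain ⟨t', c', ht', -, heq'⟩ := key z hz n 1 b' α β' one_pos hb' hint'
  simp only [ofReal_one] at heq heq'
  intro h0
  have h1 : ((p : ℂ) * ((b:ℂ) * ∏ j, (z - (β j : ℂ))) + ((1-p : ℝ):ℂ) * ((b':ℂ) * ∏ j, (z - (β' j : ℂ))))
      * (starRingEnd ℂ) ((1:ℂ) * ∏ i, (z - (α i : ℂ)))
      = (p:ℂ) * ((t:ℂ) * (z - (c:ℂ))) + ((1-p:ℝ):ℂ) * ((t':ℂ) * (z - (c':ℂ))) := by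
    rw [add_mul, mul_assoc ((p:ℂ)), mul_assoc (((1-p:ℝ)):ℂ), heq, heq']
  rw [h0, zero_mul] at h1
  have h2 := congrArg Complex.im h1
  simp only [Complex.zero_im, add_im, mul_im, ofReal_re, ofReal_im, sub_im, sub_re] at h2
  have him : (p * t + (1-p) * t') * z.im = 0 := by linarith [h2]
  have hpt : 0 < p * t + (1-p) * t' := by
    rcases eq_or_lt_of_le hp0 with h | h
    · simp [← h]; nlinarith
    · nlinarith [mul_nonneg (by linarith : (0:ℝ) ≤ 1 - p) ht'.le, mul_pos h ht]
  nlinarith [mul_pos hpt hz]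

lemma noroot (n : ℕ) (b b' p : ℝ) (α : Fin n → ℝ) (β β' : Fin (n + 1) → ℝ)
    (hb : 0 < b) (hb' : 0 < b') (hp0 : 0 ≤ p) (hp1 : p ≤ 1)
    (hint : ∀ i : Fin n, β i.castSucc ≤ α i ∧ α i ≤ β i.succ)
    (hint' : ∀ i : Fin n, β' i.castSucc ≤ α i ∧ α i ≤ β' i.succ)
    (z : ℂ) (hz : z.im ≠ 0) :
    (p : ℂ) * ((b:ℂ) * ∏ j, (z - (β j : ℂ))) + ((1-p : ℝ):ℂ) * ((b':ℂ) * ∏ j, (z - (β' j : ℂ))) ≠ 0 := by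
  rcases lt_or_gt_of_ne hz with h | h
  · have hzc : 0 < ((starRingEnd ℂ) z).im := by simpa using h
    have := noroot_pos n b b' p α β β' hb hb' hp0 hp1 hint hint' ((starRingEnd ℂ) z) (by simpa using h)
    intro h0
    apply this
    have : (starRingEnd ℂ) ((p : ℂ) * ((b:ℂ) * ∏ j, (z - (β j : ℂ))) + ((1-p : ℝ):ℂ) * ((b':ℂ) * ∏ j, (z - (β' j : ℂ)))) = 0 := by
      rw [h0, map_zero]
    rw [← this]
    simp only [map_add, map_mul, map_prod, map_sub, conj_ofReal]
  · exact noroot_pos n b b' p α β β' hb hb' hp0 hp1 hint hint' z h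

lemma aux : ∀ (d : ℕ) (H : Polynomial ℝ), H.natDegree = d → H ≠ 0 →
    (∀ z : ℂ, (H.map (algebraMap ℝ ℂ)).eval z = 0 → z.im = 0) →
    Multiset.card H.roots = H.natDegree := by
  intro d
  induction d using Nat.strong_induction_on with
  | _ d ih =>
    intro H hd hH h0
    rcases Nat.eq_zero_or_pos d with h | h
    · have h1 := Polynomial.card_roots' H
      omega
    · have hmapne : H.map (algebraMap ℝ ℂ) ≠ 0 := by
        simpa using (Polynomial.map_ne_zero_iff (algebraMap ℝ ℂ).injective).2 hH
      have hdeg : 0 < (H.map (algebraMap ℝ ℂ)).degree := by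
        rw [Polynomial.degree_map_eq_of_injective (algebraMap ℝ ℂ).injective]
        rw [Polynomial.degree_eq_natDegree hH, hd]
        exact_mod_cast h
      obtain ⟨z, hz⟩ := Complex.exists_root hdeg
      have hzim := h0 z hz
      have hzr : z = ((z.re : ℝ) : ℂ) := Complex.ext rfl (by simp [hzim])
      have hr : H.IsRoot z.re := by
        have h2 : (H.map (algebraMap ℝ ℂ)).eval ((z.re : ℝ) : ℂ) = 0 := by rw [← hzr]; exact hz
        have h3 : algebraMap ℝ ℂ (H.eval z.re) = 0 := by
          rw [← Polynomial.eval₂_at_apply, ← Polynomial.eval_map]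
          simpa using h2
        exact (map_eq_zero_iff _ (algebraMap ℝ ℂ).injective).1 h3
      obtain ⟨H₁, hH₁⟩ := Polynomial.dvd_iff_isRoot.mpr hr
      have hH₁ne : H₁ ≠ 0 := by rintro rfl; simp at hH₁; exact hH hH₁
      have hXne : (X - C z.re) ≠ (0 : Polynomial ℝ) := Polynomial.X_sub_C_ne_zero z.re
      have hndeg : H.natDegree = 1 + H₁.natDegree := by
        rw [hH₁, Polynomial.natDegree_mul hXne hH₁ne, Polynomial.natDegree_X_sub_C]
      have hroots : H.roots = z.re ::ₘ H₁.roots := by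
        rw [hH₁, Polynomial.roots_mul (by rw [← hH₁]; exact hH), Polynomial.roots_X_sub_C]
        simp
      have h0' : ∀ w : ℂ, (H₁.map (algebraMap ℝ ℂ)).eval w = 0 → w.im = 0 := by
        intro w hw
        apply h0
        rw [hH₁, Polynomial.map_mul, Polynomial.eval_mul, hw, mul_zero]
      have ihH₁ := ih H₁.natDegree (by omega) H₁ rfl hH₁ne h0'
      rw [hroots]
      simp only [Multiset.card_cons, ihH₁, hndeg]
      omega

/-- If `f = a·∏(X - αᵢ)` (degree `n`, `a > 0`) interleaves both
`g = b·∏(X - βᵢ)` and `g' = b'·∏(X - β'ᵢ)` (degree `n+1`, positive leading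
coefficients), then every convex combination `p·g + (1-p)·g'` is real-rooted. -/
theorem stmt1 (n : ℕ) (a b b' p : ℝ) (α : Fin n → ℝ) (β β' : Fin (n + 1) → ℝ)
    (ha : 0 < a) (hb : 0 < b) (hb' : 0 < b') (hp0 : 0 ≤ p) (hp1 : p ≤ 1)
    (hα : Monotone α) (hβ : Monotone β) (hβ' : Monotone β')
    (hint : ∀ i : Fin n, β i.castSucc ≤ α i ∧ α i ≤ β i.succ)
    (hint' : ∀ i : Fin n, β' i.castSucc ≤ α i ∧ α i ≤ β' i.succ) :
    RealRooted
      (Polynomial.C p * (Polynomial.C b * ∏ i : Fin (n + 1), (Polynomial.X - Polynomial.C (β i)))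
        + Polynomial.C (1 - p) *
            (Polynomial.C b' * ∏ i : Fin (n + 1), (Polynomial.X - Polynomial.C (β' i)))) := by
  set H := Polynomial.C p * (Polynomial.C b * ∏ i : Fin (n + 1), (Polynomial.X - Polynomial.C (β i)))
        + Polynomial.C (1 - p) *
            (Polynomial.C b' * ∏ i : Fin (n + 1), (Polynomial.X - Polynomial.C (β' i))) with hHdef
  have heval : ∀ z : ℂ, (H.map (algebraMap ℝ ℂ)).eval z
      = (p : ℂ) * ((b:ℂ) * ∏ j, (z - (β j : ℂ))) + ((1-p : ℝ):ℂ) * ((b':ℂ) * ∏ j, (z - (β' j : ℂ))) := by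
    intro z
    rw [hHdef]
    simp [Polynomial.map_add, Polynomial.map_mul, Polynomial.map_prod, Polynomial.map_sub,
      Polynomial.eval_prod, Polynomial.eval_mul, Polynomial.eval_add]
  have hH0 : H ≠ 0 := by
    intro h
    apply noroot n b b' p α β β' hb hb' hp0 hp1 hint hint' Complex.I (by simp)
    rw [← heval Complex.I, h]
    simp
  have hnr : ∀ z : ℂ, (H.map (algebraMap ℝ ℂ)).eval z = 0 → z.im = 0 := by
    intro z hz
    by_contra him
    exact noroot n b b' p α β β' hb hb' hp0 hp1 hint hint' z him (by rw [← heval z]; exact hz)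
  exact aux H.natDegree H rfl hH0 hnr
end

section
/- Let T : monic real polynomials of degree d → monic real polynomials of degree m be an affine linear operator mapping every [a,b]-rooted polynomial to a real-rooted polynomial, and fix ε > 0. Suppose f is [a,b]-rooted, monic of degree d, with trace (sum of roots) ε, has two distinct roots α, β with a < α < β < b, and T(f) has largest root ρ equal to the maximum of the largest root of T(g) over all [a,b]-rooted monic degree-d g with trace ε. Then for s = −min(b−β, α−a, β−α), the polynomial f_s(x) := f(x)·(x−α−s)(x−β+s)/((x−α)(x−β)) is also [a,b]-rooted, monic of degree d, with trace ε, and T(f_s) has largest root ρ. -/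
open Polynomial

/-- `f` is `[a,b]`-rooted: it is real-rooted (roots with multiplicity fill the
degree) and all its roots lie in `[a,b]`. -/
def RootedIn (f : Polynomial ℝ) (a b : ℝ) : Prop :=
  Multiset.card f.roots = f.natDegree ∧ ∀ x ∈ f.roots, x ∈ Set.Icc a b

lemma aux_eval_nonneg (p : Polynomial ℝ) (hm : p.Monic)
    (hc : Multiset.card p.roots = p.natDegree) (ρ : ℝ)
    (h : ∀ x ∈ p.roots, x ≤ ρ) : 0 ≤ p.eval ρ := by
  have hp := prod_multiset_X_sub_C_of_monic_of_roots_card_eq hm hc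
  rw [← hp, eval_multiset_prod, Multiset.map_map]
  apply Multiset.prod_nonneg
  intro x hx
  simp only [Multiset.mem_map, Function.comp_apply, eval_sub, eval_X, eval_C] at hx
  obtain ⟨r, hr, rfl⟩ := hx
  simpa using h r hr

lemma aux_shift (α β t : ℝ) (q : Polynomial ℝ) :
    (X - C (α + t)) * (X - C (β - t)) * q
      = (X - C α) * (X - C β) * q + C (t * (β - α) - t ^ 2) * q := by
  have : (X - C (α + t)) * (X - C (β - t))
      = (X - C α) * (X - C β) + C (t * (β - α) - t ^ 2) := by
    simp only [C_add, C_sub, C_mul, map_pow]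
    ring
  rw [this, add_mul]

set_option maxHeartbeats 1000000 in
/-- The root-exchange step in Lemma `affine`: moving the pair of interior roots
`α < β` of `f` outward by `s = -min(b-β, α-a, β-α)` preserves monicity, degree,
`[a,b]`-rootedness, the trace, and the extremal largest root `ρ` of `T(f)`. -/
theorem stmt15 (d m : ℕ) (a b ε ρ : ℝ) (T : Polynomial ℝ → Polynomial ℝ)
    (hT1 : ∀ f : Polynomial ℝ, f.Monic → f.natDegree = d →
      (T f).Monic ∧ (T f).natDegree = m)
    (hT2 : ∀ f : Polynomial ℝ, f.Monic → f.natDegree = d → RootedIn f a b →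
      Multiset.card (T f).roots = (T f).natDegree)
    (hTaff : ∀ f g : Polynomial ℝ, f.Monic → f.natDegree = d →
      g.Monic → g.natDegree = d → ∀ θ : ℝ,
      T (Polynomial.C (1 - θ) * f + Polynomial.C θ * g)
        = Polynomial.C (1 - θ) * T f + Polynomial.C θ * T g)
    (f : Polynomial ℝ) (hf : f.Monic) (hfd : f.natDegree = d)
    (hfab : RootedIn f a b) (hftr : f.roots.sum = ε)
    (α β : ℝ) (hαroot : α ∈ f.roots) (hβroot : β ∈ f.roots)
    (haα : a < α) (hαβ : α < β) (hβb : β < b)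
    (hρ : IsGreatest {x : ℝ | (T f).IsRoot x} ρ)
    (hmax : ∀ g : Polynomial ℝ, g.Monic → g.natDegree = d → RootedIn g a b →
      g.roots.sum = ε → ∀ x : ℝ, (T g).IsRoot x → x ≤ ρ)
    (s : ℝ) (hs : s = -min (b - β) (min (α - a) (β - α)))
    (q : Polynomial ℝ)
    (hq : f = (Polynomial.X - Polynomial.C α) * (Polynomial.X - Polynomial.C β) * q)
    (fs : Polynomial ℝ)
    (hfs : fs = (Polynomial.X - Polynomial.C (α + s))
        * (Polynomial.X - Polynomial.C (β - s)) * q) :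
    fs.Monic ∧ fs.natDegree = d ∧ RootedIn fs a b ∧ fs.roots.sum = ε
      ∧ IsGreatest {x : ℝ | (T fs).IsRoot x} ρ := by
  -- basic facts about s
  have hs1 : -s ≤ b - β := by
    rw [hs, neg_neg]; exact min_le_left _ _
  have hs2 : -s ≤ α - a := by
    rw [hs, neg_neg]; exact le_trans (min_le_right _ _) (min_le_left _ _)
  have hs3 : -s ≤ β - α := by
    rw [hs, neg_neg]; exact le_trans (min_le_right _ _) (min_le_right _ _)
  have hsneg : s < 0 := by
    rw [hs, neg_lt, neg_zero, lt_min_iff, lt_min_iff]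
    exact ⟨by linarith, by linarith, by linarith⟩
  -- q is monic
  have hquad : ∀ u v : ℝ, ((X - C u) * (X - C v)).Monic :=
    fun u v => (monic_X_sub_C u).mul (monic_X_sub_C v)
  have hqm : q.Monic := (hquad α β).of_mul_monic_left (hq ▸ hf)
  have hq0 : q ≠ 0 := hqm.ne_zero
  -- degrees
  have hdeg2 : ∀ u v : ℝ, ((X - C u) * (X - C v)).natDegree = 2 := by
    intro u v
    rw [(monic_X_sub_C u).natDegree_mul (monic_X_sub_C v),
      natDegree_X_sub_C, natDegree_X_sub_C]
  have hdeg : ∀ u v : ℝ, ((X - C u) * (X - C v) * q).natDegree = 2 + q.natDegree := by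
    intro u v
    rw [(hquad u v).natDegree_mul hqm, hdeg2]
  have hdq : d = 2 + q.natDegree := by rw [← hfd, hq, hdeg]
  -- roots decomposition
  have hroots : ∀ u v : ℝ, ((X - C u) * (X - C v) * q).roots = {u, v} + q.roots := by
    intro u v
    have h1 : (X - C u) * (X - C v) * q ≠ 0 := ((hquad u v).mul hqm).ne_zero
    have h2 : (X - C u) * (X - C v) ≠ 0 := (hquad u v).ne_zero
    rw [roots_mul h1, roots_mul h2, roots_X_sub_C, roots_X_sub_C]
    rfl
  have hfroots : f.roots = {α, β} + q.roots := by rw [hq, hroots]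
  -- q is real-rooted with roots in [a,b]
  have hqcard : Multiset.card q.roots = q.natDegree := by
    have := hfab.1
    rw [hfroots, hfd] at this
    simp only [Multiset.card_add, Multiset.insert_eq_cons, Multiset.card_cons,
      Multiset.card_singleton] at this
    omega
  have hqab : ∀ x ∈ q.roots, x ∈ Set.Icc a b := by
    intro x hx
    exact hfab.2 x (by rw [hfroots]; exact Multiset.mem_add.mpr (Or.inr hx))
  -- generic facts about shifted polynomials
  have key : ∀ u v : ℝ, a ≤ u → u ≤ b → a ≤ v → v ≤ b → u + v = α + β →
      ∀ p : Polynomial ℝ, p = (X - C u) * (X - C v) * q →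
      p.Monic ∧ p.natDegree = d ∧ RootedIn p a b ∧ p.roots.sum = ε := by
    intro u v hau hub hav hvb huv p hp
    have hm : p.Monic := hp ▸ (hquad u v).mul hqm
    have hd : p.natDegree = d := by rw [hp, hdeg, hdq]
    have hr : p.roots = {u, v} + q.roots := by rw [hp, hroots]
    refine ⟨hm, hd, ⟨?_, ?_⟩, ?_⟩
    · rw [hr, hd, hdq]
      simp only [Multiset.card_add, Multiset.insert_eq_cons, Multiset.card_cons,
        Multiset.card_singleton, hqcard]
    · intro x hx
      rw [hr, Multiset.mem_add] at hx
      rcases hx with hx | hx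
      · simp only [Multiset.insert_eq_cons, Multiset.mem_cons, Multiset.mem_singleton] at hx
        rcases hx with rfl | rfl
        · exact ⟨hau, hub⟩
        · exact ⟨hav, hvb⟩
      · exact hqab x hx
    · have hsum : f.roots.sum = α + β + q.roots.sum := by
        rw [hfroots]; simp [add_assoc]
      rw [hr]
      have : p.roots.sum = u + v + q.roots.sum := by
        rw [hr]; simp [add_assoc]
      rw [← hr, this, huv, ← hsum, hftr]
  -- properties of fs
  have hfsall := key (α + s) (β - s) (by linarith) (by linarith) (by linarith)
    (by linarith) (by ring) fs hfs
  refine ⟨hfsall.1, hfsall.2.1, hfsall.2.2.1, hfsall.2.2.2, ?_⟩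
  -- the auxiliary polynomial g = f_{-s/2}
  set g : Polynomial ℝ := (X - C (α + (-s/2))) * (X - C (β - (-s/2))) * q with hg
  have hgall := key (α + (-s/2)) (β - (-s/2)) (by linarith) (by linarith) (by linarith)
    (by linarith) (by ring) g rfl
  -- the convex combination
  set cs : ℝ := s * (β - α) - s ^ 2 with hcs
  set cg : ℝ := (-s/2) * (β - α) - (-s/2) ^ 2 with hcg
  have hcsneg : cs < 0 := by
    rw [hcs]; nlinarith
  have hcgpos : 0 < cg := by
    rw [hcg]; nlinarith
  set θ : ℝ := cs / (cs - cg) with hθ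
  have hne : cs - cg ≠ 0 := by intro h; nlinarith
  have hθpos : 0 < θ := by
    rw [hθ]; apply div_pos_of_neg_of_neg hcsneg; nlinarith
  have h1θpos : 0 < 1 - θ := by
    rw [hθ]
    have : 1 - cs / (cs - cg) = -cg / (cs - cg) := by field_simp; ring
    rw [this]
    apply div_pos_of_neg_of_neg (by nlinarith); nlinarith
  have hlin : (1 - θ) * cs + θ * cg = 0 := by
    rw [hθ]; field_simp; ring
  have hcomb : C (1 - θ) * fs + C θ * g = f := by
    rw [hfs, hg, aux_shift, aux_shift, hq]
    rw [← hcs, ← hcg]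
    have expand : ∀ c1 c2 : ℝ, C c1 * ((X - C α) * (X - C β) * q + C c2 * q)
        = C c1 * ((X - C α) * (X - C β) * q) + C (c1 * c2) * q := by
      intro c1 c2; rw [C_mul]; ring
    rw [expand, expand]
    have : C (1 - θ) * ((X - C α) * (X - C β) * q) + C ((1 - θ) * cs) * q
        + (C θ * ((X - C α) * (X - C β) * q) + C (θ * cg) * q)
        = C ((1 - θ) + θ) * ((X - C α) * (X - C β) * q)
          + C ((1 - θ) * cs + θ * cg) * q := by
      rw [C_add, C_add]; ring
    rw [this, hlin]
    simp
  -- apply affineness of T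
  have hTf : T f = C (1 - θ) * T fs + C θ * T g := by
    rw [← hcomb]
    exact hTaff fs g hfsall.1 hfsall.2.1 hgall.1 hgall.2.1 θ
  -- evaluate at ρ
  have hρ0 : (T f).eval ρ = 0 := hρ.1
  have heval : (1 - θ) * (T fs).eval ρ + θ * (T g).eval ρ = 0 := by
    rw [← hρ0, hTf]; simp
  -- nonnegativity of evals at ρ
  have hnn : ∀ p : Polynomial ℝ, p.Monic → p.natDegree = d → RootedIn p a b →
      p.roots.sum = ε → 0 ≤ (T p).eval ρ := by
    intro p hm hd hab htr
    have hTm := (hT1 p hm hd).1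
    have hTc : Multiset.card (T p).roots = (T p).natDegree := hT2 p hm hd hab
    apply aux_eval_nonneg _ hTm hTc
    intro x hx
    exact hmax p hm hd hab htr x (isRoot_of_mem_roots hx)
  have hnn1 := hnn fs hfsall.1 hfsall.2.1 hfsall.2.2.1 hfsall.2.2.2
  have hnn2 := hnn g hgall.1 hgall.2.1 hgall.2.2.1 hgall.2.2.2
  have h1 : (1 - θ) * (T fs).eval ρ = 0 := by
    nlinarith [mul_nonneg hθpos.le hnn2, mul_nonneg h1θpos.le hnn1]
  have hroot : (T fs).eval ρ = 0 :=
    (mul_eq_zero.mp h1).resolve_left (ne_of_gt h1θpos)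
  exact ⟨hroot, fun x hx =>
    hmax fs hfsall.1 hfsall.2.1 hfsall.2.2.1 hfsall.2.2.2 x hx⟩
end
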